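/- arXiv:1612.07287 — 2 statements merged into one kernel-verified Lean document; each statement's English description precedes it below -/
import Mathlib

section
/- For a single finite set S = {s_1 < ... < s_m} ⊂ ℝ, one iteration of g starting from {0} gives g_S({0}) = [−Δ_S/2, Δ_S/2], where Δ_S is the maximum gap of S. -/
open Set Pointwise

noncomputable section

/-- Voronoi cell of `c` with respect to `S ⊆ ℝ`. -/
def vorR (S : Set ℝ) (c : ℝ) : Set ℝ := {x | ∀ c' ∈ S, |x - c| ≤ |x - c'|}

/-- The operator `g_S(A) = ⋃_{c ∈ S} ((ch S + A) ∩ V_S(c)) − c` on subsets of ℝ. -/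
def gOpR (S A : Set ℝ) : Set ℝ :=
  ⋃ c ∈ S, (fun x => x - c) '' ((convexHull ℝ S + A) ∩ vorR S c)

/-- The maximum gap between consecutive elements of a set `S ⊆ ℝ` (0 if no gap exists). -/
def maxGap (S : Set ℝ) : ℝ :=
  sSup {g | ∃ a ∈ S, ∃ b ∈ S, a < b ∧ (∀ t ∈ S, ¬(a < t ∧ t < b)) ∧ g = b - a}

/-!
A point `x` of `ch(S)` that is not in `S` lies strictly between two consecutive points
`a < b` of `S`, and there the Voronoi cells are read off directly: `x ∈ V_S(c)` iff
`|x - c| ≤ min (x - a) (b - x)`. Hence `|x - c| ≤ (b - a)/2 ≤ Δ_S/2` for every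
`x ∈ ch(S) ∩ V_S(c)`. Conversely a gap `(a, b)` of maximal length `Δ_S` realises every
`y ∈ [0, Δ_S/2]` as `(a + y) - a` with `a + y ∈ V_S(a)`, and every `y ∈ [-Δ_S/2, 0]` as
`(b + y) - b` with `b + y ∈ V_S(b)`.
-/

namespace MaxGap

variable {S : Set ℝ} {a b c x : ℝ}

theorem mem_gOpR_singleton_zero_iff {y : ℝ} :
    y ∈ gOpR S {0} ↔ ∃ c ∈ S, y + c ∈ convexHull ℝ S ∧ y + c ∈ vorR S c := by
  simp only [gOpR, singleton_zero, add_zero, mem_iUnion, mem_image, exists_prop]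
  refine exists_congr fun c => and_congr_right fun _ => ⟨?_, fun h => ⟨y + c, h, by simp⟩⟩
  rintro ⟨x, hx, rfl⟩
  rwa [sub_add_cancel]

theorem exists_mem_le_of_mem_convexHull (hx : x ∈ convexHull ℝ S) : ∃ s ∈ S, s ≤ x := by
  by_contra! h
  exact lt_irrefl x (convexHull_min h (convex_Ioi x) hx)

theorem exists_mem_ge_of_mem_convexHull (hx : x ∈ convexHull ℝ S) : ∃ s ∈ S, x ≤ s := by
  by_contra! h
  exact lt_irrefl x (convexHull_min h (convex_Iio x) hx)

theorem mem_convexHull_of_le_of_le (ha : a ∈ S) (hb : b ∈ S) (hax : a ≤ x) (hxb : x ≤ b) :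
    x ∈ convexHull ℝ S := by
  refine segment_subset_convexHull ha hb ?_
  rw [segment_eq_Icc (hax.trans hxb)]
  exact ⟨hax, hxb⟩

theorem exists_consecutive_of_mem_convexHull (hS : S.Finite) (hx : x ∈ convexHull ℝ S)
    (hxS : x ∉ S) :
    ∃ a ∈ S, ∃ b ∈ S, a < x ∧ x < b ∧ ∀ t ∈ S, ¬(a < t ∧ t < b) := by
  obtain ⟨s, hs, hsx⟩ := exists_mem_le_of_mem_convexHull hx
  obtain ⟨t, ht, hxt⟩ := exists_mem_ge_of_mem_convexHull hx
  have hbelow : (S ∩ Iic x).Finite := hS.inter_of_left _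
  have habove : (S ∩ Ici x).Finite := hS.inter_of_left _
  obtain ⟨haS, hax⟩ : sSup (S ∩ Iic x) ∈ S ∩ Iic x :=
    Nonempty.csSup_mem ⟨s, hs, hsx⟩ hbelow
  obtain ⟨hbS, hxb⟩ : sInf (S ∩ Ici x) ∈ S ∩ Ici x :=
    Nonempty.csInf_mem ⟨t, ht, hxt⟩ habove
  refine ⟨_, haS, _, hbS, hax.lt_of_ne (ne_of_mem_of_not_mem haS hxS),
    hxb.lt_of_ne' (ne_of_mem_of_not_mem hbS hxS), ?_⟩
  rintro u hu ⟨hau, hub⟩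
  rcases le_total u x with hux | hxu
  · exact hau.not_ge (le_csSup hbelow.bddAbove ⟨hu, hux⟩)
  · exact hub.not_ge (csInf_le habove.bddBelow ⟨hu, hxu⟩)

theorem mem_vorR_iff_of_consecutive (ha : a ∈ S) (hb : b ∈ S)
    (hgap : ∀ t ∈ S, ¬(a < t ∧ t < b)) (hax : a ≤ x) (hxb : x ≤ b) :
    x ∈ vorR S c ↔ |x - c| ≤ x - a ∧ |x - c| ≤ b - x := by
  constructor
  · intro hc
    refine ⟨?_, ?_⟩
    · simpa [abs_of_nonneg (sub_nonneg.2 hax)] using hc a ha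
    · simpa [abs_sub_comm x b, abs_of_nonneg (sub_nonneg.2 hxb)] using hc b hb
  · rintro ⟨hca, hcb⟩ c' hc'
    by_cases hc'a : c' ≤ a
    · exact hca.trans ((by linarith : x - a ≤ x - c').trans (le_abs_self _))
    · have hbc' : b ≤ c' := not_lt.1 fun h => hgap c' hc' ⟨not_le.1 hc'a, h⟩
      exact hcb.trans ((by linarith : b - x ≤ -(x - c')).trans (neg_le_abs _))

theorem maxGap_nonneg (S : Set ℝ) : 0 ≤ maxGap S := by
  refine Real.sSup_nonneg ?_
  rintro g ⟨a, -, b, -, hab, -, rfl⟩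
  exact (sub_pos.2 hab).le

theorem finite_gaps (hS : S.Finite) :
    {g | ∃ a ∈ S, ∃ b ∈ S, a < b ∧ (∀ t ∈ S, ¬(a < t ∧ t < b)) ∧ g = b - a}.Finite := by
  refine ((hS.prod hS).image fun p : ℝ × ℝ => p.2 - p.1).subset ?_
  rintro g ⟨a, ha, b, hb, -, -, rfl⟩
  exact ⟨(a, b), ⟨ha, hb⟩, rfl⟩

theorem sub_le_maxGap (hS : S.Finite) (ha : a ∈ S) (hb : b ∈ S) (hab : a < b)
    (hgap : ∀ t ∈ S, ¬(a < t ∧ t < b)) : b - a ≤ maxGap S :=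
  le_csSup (finite_gaps hS).bddAbove ⟨a, ha, b, hb, hab, hgap, rfl⟩

theorem abs_sub_le_maxGap_half (hS : S.Finite) (hx : x ∈ convexHull ℝ S)
    (hc : x ∈ vorR S c) : |x - c| ≤ maxGap S / 2 := by
  by_cases hxS : x ∈ S
  · have hxc : |x - c| ≤ 0 := by simpa using hc x hxS
    linarith [maxGap_nonneg S]
  obtain ⟨a, ha, b, hb, hax, hxb, hgap⟩ := exists_consecutive_of_mem_convexHull hS hx hxS
  obtain ⟨hca, hcb⟩ := (mem_vorR_iff_of_consecutive ha hb hgap hax.le hxb.le).1 hc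
  linarith [sub_le_maxGap hS ha hb (hax.trans hxb) hgap]

theorem exists_consecutive_sub_eq_maxGap (hS : S.Finite) (hpos : maxGap S ≠ 0) :
    ∃ a ∈ S, ∃ b ∈ S, a < b ∧ (∀ t ∈ S, ¬(a < t ∧ t < b)) ∧ maxGap S = b - a := by
  refine Nonempty.csSup_mem (nonempty_iff_ne_empty.2 fun h => hpos ?_) (finite_gaps hS)
  rw [maxGap, h, Real.sSup_empty]

theorem exists_mem_vorR_of_abs_le_maxGap_half (hS : S.Finite) (hne : S.Nonempty) {y : ℝ}
    (hy : |y| ≤ maxGap S / 2) :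
    ∃ c ∈ S, y + c ∈ convexHull ℝ S ∧ y + c ∈ vorR S c := by
  by_cases hΔ : maxGap S = 0
  · obtain ⟨s, hs⟩ := hne
    have hy0 : y = 0 := abs_nonpos_iff.1 (by linarith)
    subst hy0
    exact ⟨s, hs, by simpa using subset_convexHull ℝ S hs, fun c' _ => by simp⟩
  obtain ⟨a, ha, b, hb, -, hgap, hΔab⟩ := exists_consecutive_sub_eq_maxGap hS hΔ
  obtain ⟨hy₁, hy₂⟩ := abs_le.1 hy
  rcases le_total 0 y with hy₀ | hy₀
  · have hax : a ≤ y + a := by linarith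
    have hxb : y + a ≤ b := by linarith
    refine ⟨a, ha, mem_convexHull_of_le_of_le ha hb hax hxb,
      (mem_vorR_iff_of_consecutive ha hb hgap hax hxb).2 ?_⟩
    rw [add_sub_cancel_right, abs_of_nonneg hy₀]
    constructor <;> linarith
  · have hax : a ≤ y + b := by linarith
    have hxb : y + b ≤ b := by linarith
    refine ⟨b, hb, mem_convexHull_of_le_of_le ha hb hax hxb,
      (mem_vorR_iff_of_consecutive ha hb hgap hax hxb).2 ?_⟩
    rw [add_sub_cancel_right, abs_of_nonpos hy₀]
    constructor <;> linarith

end MaxGap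

theorem stmt16 (S : Set ℝ) (hfin : S.Finite) (hne : S.Nonempty) :
    gOpR S {0} = Icc (-(maxGap S / 2)) (maxGap S / 2) := by
  ext y
  rw [MaxGap.mem_gOpR_singleton_zero_iff, mem_Icc, ← abs_le]
  constructor
  · rintro ⟨c, -, hhull, hvor⟩
    simpa using MaxGap.abs_sub_le_maxGap_half hfin hhull hvor
  · exact MaxGap.exists_mem_vorR_of_abs_le_maxGap_half hfin hne
end
end

section
/- Fix P_max ≥ 0 and 0 ≤ φ < π/2, and for x ∈ [0, P_max] let T(x) = {(P, Q) ∈ ℝ² : 0 ≤ P ≤ x and |Q| ≤ P tan φ}. Then the triangle D = T(P_max) is F-invariant with respect to the collection 𝕊 = {T(x) : 0 ≤ x ≤ P_max}: for every x ∈ [0, P_max], every z ∈ D, and every p ∈ T(x), the point p + z − proj_{T(x)}(z) lies in D. Moreover D is the minimal F-invariant set with respect to 𝕊 containing the origin. -/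
/-!
Write `t = tan φ ≥ 0` and let `S` be the sector `{z | 0 ≤ z₀, |z₁| ≤ z₀ t}`, so that
`T(x) = S ∩ {z₀ ≤ x}`. For `z ∈ S` the projection onto `T(x)` is explicit: `z` itself when
`z₀ ≤ x`, and otherwise `(x, q)` with `q` the clamp of `z₁` to `[-x t, x t]`, because that point
satisfies the variational inequality `⟪z - w, c - w⟫ ≤ 0` on `T(x)`. In both cases its
first coordinate is `min z₀ x` and the residual `z - proj z` lies in `S`. Since `S` is closed under
addition, `p + (z - proj z) ∈ S` with first coordinate at most `P_max`, which is invariance.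
Minimality: the projection fixes `0`, so one step from `0` reaches every `p ∈ T(P_max)`.
-/

open Set

noncomputable section

/-- The triangle `T(x)` in the PQ plane with aperture angle `φ`. -/
def Tset (φ x : ℝ) : Set (EuclideanSpace ℝ (Fin 2)) :=
  {z | 0 ≤ z 0 ∧ z 0 ≤ x ∧ |z 1| ≤ z 0 * Real.tan φ}

open RealInnerProductSpace

theorem eq_of_dist_le_of_inner_le_zero {E : Type*} [NormedAddCommGroup E]
    [InnerProductSpace ℝ E] {z w w₀ : E} (hdist : dist z w ≤ dist z w₀)
    (hvar : ⟪z - w₀, w - w₀⟫ ≤ 0) : w = w₀ := by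
  have hsplit : ‖z - w‖ ^ 2 = ‖z - w₀‖ ^ 2 - 2 * ⟪z - w₀, w - w₀⟫ + ‖w - w₀‖ ^ 2 := by
    rw [← norm_sub_sq_real]; congr 2; abel
  have hsq : ‖z - w‖ ^ 2 ≤ ‖z - w₀‖ ^ 2 := by
    rw [← dist_eq_norm, ← dist_eq_norm]; gcongr
  have : ‖w - w₀‖ ^ 2 = 0 := le_antisymm (by linarith) (sq_nonneg _)
  simpa [sub_eq_zero] using this

theorem sub_mul_sub_clamp_nonpos {a b y c : ℝ} (hc : c ∈ Icc a b) :
    (y - max a (min y b)) * (c - max a (min y b)) ≤ 0 := by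
  obtain ⟨hac, hcb⟩ := hc
  rcases min_cases y b with h₁ | h₁ <;> rcases max_cases a (min y b) with h₂ | h₂ <;>
  rw [h₂.1] <;> nlinarith [h₁.1, h₁.2, h₂.2]

theorem abs_sub_clamp_le {m M y : ℝ} (hmM : m ≤ M) (hy : |y| ≤ M) :
    |y - max (-m) (min y m)| ≤ M - m := by
  rw [abs_le] at hy ⊢
  rcases min_cases y m with h₁ | h₁ <;> rcases max_cases (-m) (min y m) with h₂ | h₂ <;>
  constructor <;> linarith [h₁.1, h₂.1]

def sector (φ : ℝ) : Set (EuclideanSpace ℝ (Fin 2)) :=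
  {z | 0 ≤ z 0 ∧ |z 1| ≤ z 0 * Real.tan φ}

theorem mem_Tset_iff {φ x : ℝ} {z : EuclideanSpace ℝ (Fin 2)} :
    z ∈ Tset φ x ↔ z ∈ sector φ ∧ z 0 ≤ x := by
  simp only [Tset, sector, mem_ofPred_eq]; tauto

theorem add_mem_sector {φ : ℝ} {a b : EuclideanSpace ℝ (Fin 2)} (ha : a ∈ sector φ)
    (hb : b ∈ sector φ) : a + b ∈ sector φ := by
  obtain ⟨ha₀, ha₁⟩ := ha
  obtain ⟨hb₀, hb₁⟩ := hb
  simp only [sector, mem_ofPred_eq, PiLp.add_apply]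
  refine ⟨by linarith, ?_⟩
  calc |a 1 + b 1| ≤ |a 1| + |b 1| := abs_add_le _ _
    _ ≤ (a 0 + b 0) * Real.tan φ := by linarith

/-- The nearest point to `z` on the edge `{x} × [-x tan φ, x tan φ]` of `Tset φ x`. -/
def edgeProj (φ x : ℝ) (z : EuclideanSpace ℝ (Fin 2)) : EuclideanSpace ℝ (Fin 2) :=
  !₂[x, max (-(x * Real.tan φ)) (min (z 1) (x * Real.tan φ))]

theorem edgeProj_mem_Tset {φ x : ℝ} (ht : 0 ≤ Real.tan φ) (hx : 0 ≤ x)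
    (z : EuclideanSpace ℝ (Fin 2)) : edgeProj φ x z ∈ Tset φ x := by
  refine ⟨by simpa [edgeProj] using hx, by simp [edgeProj], ?_⟩
  simpa [edgeProj, abs_le] using mul_nonneg hx ht

theorem inner_sub_edgeProj_nonpos {φ x : ℝ} (ht : 0 ≤ Real.tan φ)
    {z c : EuclideanSpace ℝ (Fin 2)} (hxz : x ≤ z 0) (hc : c ∈ Tset φ x) :
    ⟪z - edgeProj φ x z, c - edgeProj φ x z⟫ ≤ 0 := by
  obtain ⟨hc₀, hcx, hc₁⟩ := hc
  have hc₁' : c 1 ∈ Icc (-(x * Real.tan φ)) (x * Real.tan φ) :=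
    abs_le.mp (hc₁.trans (mul_le_mul_of_nonneg_right hcx ht))
  have hfst : (z 0 - x) * (c 0 - x) ≤ 0 :=
    mul_nonpos_of_nonneg_of_nonpos (by linarith) (by linarith)
  have hsnd := sub_mul_sub_clamp_nonpos (y := z 1) hc₁'
  simp only [edgeProj, PiLp.inner_apply, Fin.sum_univ_two, RCLike.inner_apply, PiLp.sub_apply,
    conj_trivial, Matrix.cons_val_zero, Matrix.cons_val_one, Matrix.cons_val_fin_one]
  linarith

theorem proj_Tset_of_mem_sector {φ x : ℝ} (ht : 0 ≤ Real.tan φ)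
    {z w : EuclideanSpace ℝ (Fin 2)} (hz : z ∈ sector φ) (hw : w ∈ Tset φ x)
    (hmin : ∀ c ∈ Tset φ x, dist z w ≤ dist z c) :
    w 0 = min (z 0) x ∧ z - w ∈ sector φ := by
  rcases le_total (z 0) x with hzx | hxz
  · have hzw : z = w := dist_le_zero.mp (by simpa using hmin z (mem_Tset_iff.mpr ⟨hz, hzx⟩))
    subst hzw
    exact ⟨(min_eq_left hzx).symm, by simp [sector]⟩
  · have hx : 0 ≤ x := hw.1.trans hw.2.1
    obtain rfl : w = edgeProj φ x z :=
      eq_of_dist_le_of_inner_le_zero (hmin _ (edgeProj_mem_Tset ht hx z))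
        (inner_sub_edgeProj_nonpos ht hxz hw)
    refine ⟨by simp [edgeProj, min_eq_right hxz], by simpa [edgeProj] using hxz, ?_⟩
    simpa [edgeProj, sub_mul] using
      abs_sub_clamp_le (mul_le_mul_of_nonneg_right hxz ht) hz.2

theorem stmt17 (Pmax φ : ℝ) (hP : 0 ≤ Pmax) (hφ0 : 0 ≤ φ) (hφ1 : φ < Real.pi / 2)
    (projT : ℝ → EuclideanSpace ℝ (Fin 2) → EuclideanSpace ℝ (Fin 2))
    (hproj : ∀ x ∈ Icc (0 : ℝ) Pmax, ∀ z : EuclideanSpace ℝ (Fin 2),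
        projT x z ∈ Tset φ x ∧ ∀ c ∈ Tset φ x, dist z (projT x z) ≤ dist z c) :
    (∀ x ∈ Icc (0 : ℝ) Pmax, ∀ z ∈ Tset φ Pmax, ∀ p ∈ Tset φ x,
        p + z - projT x z ∈ Tset φ Pmax) ∧
    (0 : EuclideanSpace ℝ (Fin 2)) ∈ Tset φ Pmax ∧
    (∀ Q : Set (EuclideanSpace ℝ (Fin 2)),
        (∀ x ∈ Icc (0 : ℝ) Pmax, ∀ p ∈ Tset φ x, ∀ z ∈ Q, z + p - projT x z ∈ Q) →
        (0 : EuclideanSpace ℝ (Fin 2)) ∈ Q → Tset φ Pmax ⊆ Q) := by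
  have ht : 0 ≤ Real.tan φ := Real.tan_nonneg_of_nonneg_of_le_pi_div_two hφ0 hφ1.le
  have h0 : (0 : EuclideanSpace ℝ (Fin 2)) ∈ Tset φ Pmax := by simp [Tset, hP]
  refine ⟨fun x hx z hz p hp => ?_, h0, fun Q hQ hQ0 p hp => ?_⟩
  · obtain ⟨hw, hmin⟩ := hproj x hx z
    obtain ⟨hz, hzP⟩ := mem_Tset_iff.mp hz
    obtain ⟨hp, hpx⟩ := mem_Tset_iff.mp hp
    obtain ⟨hw₀, hres⟩ := proj_Tset_of_mem_sector ht hz hw hmin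
    rw [add_sub_assoc, mem_Tset_iff]
    refine ⟨add_mem_sector hp hres, ?_⟩
    simp only [PiLp.add_apply, PiLp.sub_apply, hw₀]
    rcases min_cases (z 0) x with ⟨h, _⟩ | ⟨h, _⟩ <;> linarith [hx.2]
  · have hfix : projT Pmax 0 = 0 :=
      (dist_le_zero.mp (by simpa using (hproj Pmax ⟨hP, le_rfl⟩ 0).2 0 h0)).symm
    simpa [hfix] using hQ Pmax ⟨hP, le_rfl⟩ p hp 0 hQ0
end
end
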